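/- Every infinite virtually cyclic group that contains no non-trivial finite normal subgroup is isomorphic to the infinite cyclic group ℤ or to the infinite dihedral group D∞. -/

import Mathlib

/-- A group is virtually cyclic if it contains a cyclic subgroup of finite index. -/
def VirtuallyCyclic (G : Type*) [Group G] : Prop :=
  ∃ H : Subgroup G, IsCyclic ↥H ∧ H.FiniteIndex

/-- An infinite virtually cyclic group is of type I if it admits a surjective
homomorphism onto the infinite cyclic group ℤ. -/
def IsTypeI (G : Type*) [Group G] : Prop :=
  ∃ f : G →* Multiplicative ℤ, Function.Surjective f

/-- An infinite virtually cyclic group is of type II if it admits a surjective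
homomorphism onto the infinite dihedral group D∞. -/
def IsTypeII (G : Type*) [Group G] : Prop :=
  ∃ f : G →* DihedralGroup 0, Function.Surjective f

/-!
Let `N` be the normal core of a cyclic subgroup of finite index and `C` its centralizer: a normal
subgroup of finite index in which `N` is central. The transfer `C → N ≅ ℤ` is `g ↦ g ^ [C : N]`,
so its kernel meets the torsion-free `N` trivially and is finite; being characteristic in the
normal subgroup `C`, it is normal in `V`, hence trivial. Thus `C` embeds in `ℤ` and is infinite
cyclic. As `C` contains its own centralizer, every element outside `C` acts on `C ≅ ℤ` by the
non-trivial automorphism, inversion. Hence `[V : C] ≤ 2`, every element `v ∉ C` is an involution,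
and with a generator `c` of `C` the relations `v² = 1`, `v c v⁻¹ = c⁻¹` exhibit `V ≅ D∞`.
-/

open Subgroup

section General

variable {G : Type*} [Group G]

theorem Subgroup.infinite_of_finiteIndex [Infinite G] (H : Subgroup G) [H.FiniteIndex] :
    Infinite H :=
  not_finite_iff_infinite.1 fun _ =>
    have := (finite_iff_finite_and_finiteIndex H).2 ⟨‹_›, ‹_›⟩
    not_finite G

theorem Subgroup.finite_of_disjoint_of_finiteIndex {H K : Subgroup G} [H.FiniteIndex]
    (hHK : Disjoint H K) : Finite K := by
  refine Nat.finite_of_card_ne_zero ?_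
  rw [← relIndex_bot_left, ← hHK.eq_bot, inf_relIndex_right]
  exact FiniteIndex.index_ne_zero

theorem Subgroup.characteristic_of_forall_mem_iff_pow_eq_one {K : Subgroup G} {n : ℕ}
    (hK : ∀ x, x ∈ K ↔ x ^ n = 1) : K.Characteristic :=
  characteristic_iff_le_comap.2 fun ϕ x hx => by
    rw [mem_comap, hK] at *
    simp [← map_pow, hx]

theorem IsCyclic.nonempty_mulEquiv_multiplicativeInt [IsCyclic G] [Infinite G] :
    Nonempty (G ≃* Multiplicative ℤ) :=
  ⟨mulEquivOfCyclicCardEq (by simp [Nat.card_eq_zero_of_infinite])⟩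

instance IsCyclic.isMulTorsionFree_of_infinite [IsCyclic G] [Infinite G] : IsMulTorsionFree G :=
  let ⟨e⟩ := IsCyclic.nonempty_mulEquiv_multiplicativeInt (G := G)
  Function.Injective.isMulTorsionFree e.toMonoidHom e.injective

theorem IsCyclic.mulAut_eq_self_or_inv [IsCyclic G] [Infinite G] (σ : MulAut G) :
    (∀ x, σ x = x) ∨ (∀ x, σ x = x⁻¹) := by
  obtain ⟨k, hk⟩ := σ.toMonoidHom.map_cyclic
  obtain ⟨l, hl⟩ := σ.symm.toMonoidHom.map_cyclic
  obtain ⟨x, hx⟩ := exists_ne (1 : G)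
  have hkl : k * l = 1 := by
    have : x ^ (k * l - 1) = 1 := by
      rw [zpow_sub_one, zpow_mul, ← hk, ← hl]
      simp
    rwa [IsMulTorsionFree.zpow_eq_one_iff_right hx, sub_eq_zero] at this
  rcases Int.eq_one_or_neg_one_of_mul_eq_one hkl with rfl | rfl
  · exact .inl fun x => by simpa using hk x
  · exact .inr fun x => by simpa using hk x

end General

section Dihedral

variable {G : Type*} [Group G]

theorem conj_zpow_of_conj_eq_inv {c v : G} (hvc : v * c * v⁻¹ = c⁻¹) (i : ℤ) :
    v * c ^ i * v⁻¹ = c ^ (-i) := by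
  rw [← conj_zpow, hvc, inv_zpow']

def dihedralZeroHom (c v : G) (hv : v * v = 1) (hvc : v * c * v⁻¹ = c⁻¹) :
    DihedralGroup 0 →* G where
  toFun
    | .r (i : ℤ) => c ^ i
    | .sr (i : ℤ) => v * c ^ i
  map_one' := zpow_zero c
  map_mul' := by
    have hcv : ∀ i : ℤ, c ^ i * v = v * c ^ (-i) := fun i => by
      rw [← conj_zpow_of_conj_eq_inv hvc, inv_eq_of_mul_eq_one_right hv, ← mul_assoc,
        ← mul_assoc, hv, one_mul]
    rintro ((i : ℤ) | (i : ℤ)) ((j : ℤ) | (j : ℤ))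
    · exact zpow_add c i j
    · show v * c ^ (j - i) = c ^ i * (v * c ^ j)
      rw [← mul_assoc, hcv, mul_assoc, ← zpow_add, neg_add_eq_sub]
    · show v * c ^ (i + j) = v * c ^ i * c ^ j
      rw [zpow_add, mul_assoc]
    · show c ^ (j - i) = v * c ^ i * (v * c ^ j)
      rw [mul_assoc, ← mul_assoc (c ^ i), hcv, ← mul_assoc, ← mul_assoc, hv, one_mul, ← zpow_add,
        neg_add_eq_sub]

theorem dihedralZeroHom_bijective {c v : G} (hv : v * v = 1) (hvc : v * c * v⁻¹ = c⁻¹)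
    (hc : ¬IsOfFinOrder c) (hindex : (zpowers c).index = 2) (hvz : v ∉ zpowers c) :
    Function.Bijective (dihedralZeroHom c v hv hvc) := by
  refine ⟨(injective_iff_map_eq_one _).2 ?_, fun x => ?_⟩
  · rintro ((i : ℤ) | (i : ℤ)) (hi : _ = 1)
    · rw [injective_zpow_iff_not_isOfFinOrder.2 hc (hi.trans (zpow_zero c).symm)]
      rfl
    · exact absurd (eq_inv_of_mul_eq_one_left hi ▸ inv_mem (zpow_mem (mem_zpowers c) i)) hvz
  · by_cases hx : x ∈ zpowers c
    · obtain ⟨i, rfl⟩ := mem_zpowers_iff.1 hx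
      exact ⟨.r i, rfl⟩
    · obtain ⟨i, hi⟩ := mem_zpowers_iff.1
        ((mul_mem_iff_of_index_two hindex).2 (iff_of_false hvz hx))
      refine ⟨.sr i, (?_ : v * c ^ i = x)⟩
      rw [hi, ← mul_assoc, hv, one_mul]

end Dihedral

section SelfCentralizing

variable {G : Type*} [Group G] {C : Subgroup G} [C.Normal] [IsCyclic C] [Infinite C]

theorem conj_eq_inv_of_centralizer_le (hC : centralizer C ≤ C) {v x : G} (hv : v ∉ C)
    (hx : x ∈ C) : v * x * v⁻¹ = x⁻¹ := by
  rcases IsCyclic.mulAut_eq_self_or_inv (MulAut.conjNormal v : MulAut C) with hid | hinv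
  · refine absurd (hC (mem_centralizer_iff.2 fun y hy => ?_)) hv
    have hy : v * y * v⁻¹ = y := congrArg Subtype.val (hid ⟨y, hy⟩)
    exact (mul_inv_eq_iff_eq_mul.1 hy).symm
  · exact congrArg Subtype.val (hinv ⟨x, hx⟩)

theorem index_eq_two_of_centralizer_le (hC : centralizer C ≤ C) (hne : C ≠ ⊤) :
    C.index = 2 := by
  obtain ⟨v, hv⟩ : ∃ v, v ∉ C := by simpa [eq_top_iff'] using hne
  refine index_eq_two_iff_exists_notMem_and'.2
    ⟨v, hv, fun w => or_iff_not_imp_right.2 fun hw => hC (mem_centralizer_iff.2 fun x hx => ?_)⟩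
  calc x * (v * w) = (v * x * v⁻¹)⁻¹ * (v * w) := by
        rw [conj_eq_inv_of_centralizer_le hC hv hx, inv_inv]
    _ = v * x⁻¹ * w := by group
    _ = v * (w * x * w⁻¹) * w := by rw [conj_eq_inv_of_centralizer_le hC hw hx]
    _ = v * w * x := by group

theorem mul_self_eq_one_of_centralizer_le (hC : centralizer C ≤ C) {v : G} (hv : v ∉ C) :
    v * v = 1 := by
  have hvv : v * v ∈ C := (mul_mem_iff_of_index_two
    (index_eq_two_of_centralizer_le hC (fun hCtop => hv (hCtop ▸ mem_top v)))).2 Iff.rfl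
  have : (⟨v * v, hvv⟩ : C) = (⟨v * v, hvv⟩ : C)⁻¹ := Subtype.ext <| by
    rw [coe_inv, ← conj_eq_inv_of_centralizer_le hC hv hvv]; group
  simpa using congrArg Subtype.val (self_eq_inv.1 this)

theorem nonempty_mulEquiv_dihedralGroup_zero_of_centralizer_le (hC : centralizer C ≤ C)
    (hne : C ≠ ⊤) : Nonempty (G ≃* DihedralGroup 0) := by
  obtain ⟨v, hv⟩ : ∃ v, v ∉ C := by simpa [eq_top_iff'] using hne
  obtain ⟨c, rfl⟩ := (Subgroup.isCyclic_iff_exists_zpowers_eq_top C).1 ‹_›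
  have hc : ¬IsOfFinOrder c := infinite_zpowers.1 (Set.infinite_coe_iff.1 ‹_›)
  exact ⟨(MulEquiv.ofBijective _ (dihedralZeroHom_bijective
    (mul_self_eq_one_of_centralizer_le hC hv) (conj_eq_inv_of_centralizer_le hC hv (mem_zpowers c))
    hc (index_eq_two_of_centralizer_le hC hne) hv)).symm⟩

end SelfCentralizing

section NoFiniteNormal

variable {V : Type*} [Group V]

theorem eq_bot_of_characteristic_of_finite (h : ∀ K : Subgroup V, K.Normal → Finite K → K = ⊥)
    {C : Subgroup V} [C.Normal] (K : Subgroup C) [K.Characteristic] [Finite K] : K = ⊥ := by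
  have := Finite.of_equiv K (K.equivMapOfInjective C.subtype C.subtype_injective).toEquiv
  exact (map_eq_bot_iff_of_injective K C.subtype_injective).1 (h _ inferInstance this)

theorem isCyclic_of_normal_of_le_center (h : ∀ K : Subgroup V, K.Normal → Finite K → K = ⊥)
    (C : Subgroup V) [C.Normal] (A : Subgroup C) [A.FiniteIndex] [IsCyclic A] [Infinite A]
    (hA : A ≤ center C) : IsCyclic C := by
  obtain ⟨e⟩ := IsCyclic.nonempty_mulEquiv_multiplicativeInt (G := A)
  set τ := MonoidHom.transfer e.toMonoidHom
  have hτ : ∀ g, g ∈ τ.ker ↔ g ^ A.index = 1 := fun g => by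
    rw [MonoidHom.mem_ker, MonoidHom.transfer_eq_pow _ g fun k g₀ hk => ?_]
    · simp [Subtype.ext_iff]
    · rw [← mul_right_inj g₀⁻¹, ← (hA hk).comm, mul_inv_cancel_right]
  have : τ.ker.Characteristic := characteristic_of_forall_mem_iff_pow_eq_one hτ
  have hdisj : Disjoint A τ.ker := disjoint_def.2 fun {x} hx hx' => by
    have : (⟨x, hx⟩ : A) ^ A.index = 1 := Subtype.ext ((hτ x).1 hx')
    simpa using congrArg Subtype.val ((pow_eq_one_iff_left FiniteIndex.index_ne_zero).1 this)
  have : Finite τ.ker := finite_of_disjoint_of_finiteIndex hdisj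
  exact isCyclic_of_injective τ (τ.ker_eq_bot_iff.1 (eq_bot_of_characteristic_of_finite h τ.ker))

end NoFiniteNormal

/-- Every infinite virtually cyclic group with no non-trivial finite normal subgroup is
isomorphic to the infinite cyclic group ℤ or to the infinite dihedral group D∞. -/
theorem infinite_cyclic_or_dihedral_of_no_finite_normal (V : Type*) [Group V] [Infinite V]
    (hV : VirtuallyCyclic V)
    (h : ∀ K : Subgroup V, K.Normal → Finite K → K = ⊥) :
    Nonempty (V ≃* Multiplicative ℤ) ∨ Nonempty (V ≃* DihedralGroup 0) := by
  obtain ⟨H, hH, hHfin⟩ := hV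
  let N := H.normalCore
  have : IsCyclic N := isCyclic_of_le H.normalCore_le
  have : Infinite N := N.infinite_of_finiteIndex
  let C := centralizer (N : Set V)
  have hNC : N ≤ C := le_centralizer N
  have : C.FiniteIndex := finiteIndex_of_le hNC
  have : Infinite C := C.infinite_of_finiteIndex
  let eN := subgroupOfEquivOfLe hNC
  have : IsCyclic (N.subgroupOf C) := isCyclic_of_injective eN.toMonoidHom eN.injective
  have : Infinite (N.subgroupOf C) := eN.toEquiv.infinite_iff.2 ‹_›
  have : IsCyclic C := isCyclic_of_normal_of_le_center h C (N.subgroupOf C)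
    fun x hx => mem_center_iff.2 fun y => Subtype.ext (mem_centralizer_iff.1 y.2 x hx).symm
  by_cases hC : C = ⊤
  · obtain ⟨e⟩ := IsCyclic.nonempty_mulEquiv_multiplicativeInt (G := C)
    exact .inl ⟨((MulEquiv.subgroupCongr hC).trans topEquiv).symm.trans e⟩
  · exact .inr (nonempty_mulEquiv_dihedralGroup_zero_of_centralizer_le (centralizer_le hNC) hC)
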